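/- Let K be a Kekulé cell over a finite set P. (a) If a port p ∈ P is flexible for K, then for every g ∈ K there is a channel c with p ∈ c and g ⊕ c ∈ K. (b) If K has a flexible port, then K has at least two flexible ports. -/

import Mathlib

/-!
If Kekulé states `W`, `W'` of `G` disagree at a port `p`, then `W ∆ W'` has maximum degree two,
degree one at `p` and degree zero or two at every internal node. Following it from `p` traces a
path that ends at another port `q`, and flipping `W` along this path yields a Kekulé state whose
port assignment differs from that of `W` exactly at `p` and `q`; in particular `q` is flexible too.
-/

open scoped symmDiff

namespace Kekule

abbrev Node := ℕ
abbrev Graph := Finset (Finset Node)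

/-- `G` is a graph: every edge is a 2-element set of nodes. -/
def IsGraph (G : Graph) : Prop := ∀ e ∈ G, e.card = 2

/-- The nodes of a graph: the elements of its edges. -/
def nodes (G : Graph) : Finset Node := G.biUnion id

/-- The number of edges of `G` containing `v`. -/
def deg (G : Graph) (v : Node) : ℕ := (G.filter (fun e => v ∈ e)).card

/-- A port is a node contained in exactly one edge. -/
def ports (G : Graph) : Finset Node := (nodes G).filter (fun v => deg G v = 1)

/-- An internal node is a node that is not a port. -/
def internal (G : Graph) : Finset Node := (nodes G).filter (fun v => deg G v ≠ 1)

/-- A Kekulé state of `G`: a subgraph `W ⊆ G` such that every internal node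
of `G` lies in exactly one edge of `W`. -/
def IsKekule (G W : Graph) : Prop := W ⊆ G ∧ ∀ v ∈ internal G, deg W v = 1

/-- A curve in `G`: a subgraph `C ⊆ G` such that every node of `C` that is
internal in `G` lies in exactly two edges of `C`. -/
def IsCurve (G C : Graph) : Prop :=
  C ⊆ G ∧ ∀ v ∈ nodes C, v ∈ internal G → deg C v = 2

/-- `(C, W)` is an alternating curve in `G`: both are subgraphs of `G`,
`C` is a curve in `G`, and `W ∩ C` is a Kekulé state of `C`. -/
def IsAlternating (G C W : Graph) : Prop :=
  W ⊆ G ∧ IsCurve G C ∧ IsKekule C (W ∩ C)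

/-- `W|P`: the set of ports in `P` that lie in some edge of `W`. -/
def rest (W : Graph) (P : Finset Node) : Finset Node := P ∩ nodes W

/-- The set of Kekulé port assignments of `G`. -/
def KP (G : Graph) : Set (Finset Node) :=
  {g | ∃ W, IsKekule G W ∧ rest W (ports G) = g}

/-- A cell `K` over `P` is a Kekulé cell if it is the set of Kekulé port
assignments of some graph with port set `P`. -/
def IsKekuleCell (P : Finset Node) (K : Set (Finset Node)) : Prop :=
  ∃ G, IsGraph G ∧ ports G = P ∧ KP G = K

/-- A channel: a 2-element subset of `P`. -/
def IsChannel (P : Finset Node) (c : Finset Node) : Prop := c ⊆ P ∧ c.card = 2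

/-- A port `p` is flexible for a cell `K`. -/
def Flexible (K : Set (Finset Node)) (p : Node) : Prop :=
  ∃ g ∈ K, ∃ g' ∈ K, p ∈ g ∧ p ∉ g'

/-- Hamming distance between two port assignments. -/
def hdist (k k' : Finset Node) : ℕ := (k ∆ k').card

/-- The Hamming diameter of `K` equals `n`. -/
def HamDiamEq (K : Set (Finset Node)) (n : ℕ) : Prop :=
  (∃ k ∈ K, ∃ k' ∈ K, hdist k k' = n) ∧ ∀ k ∈ K, ∀ k' ∈ K, hdist k k' ≤ n

/-- `G` is connected: nonempty, and any two distinct nodes are joined by a walk. -/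
def Connected (G : Graph) : Prop :=
  G.Nonempty ∧ ∀ p ∈ nodes G, ∀ q ∈ nodes G, p ≠ q →
    ∃ (n : ℕ) (f : ℕ → Node), f 0 = p ∧ f n = q ∧
      ∀ i < n, ({f i, f (i + 1)} : Finset Node) ∈ G

/-- `C` is a simple path between `p` and `q`. -/
def IsSimplePath (C : Graph) (p q : Node) : Prop :=
  Connected C ∧ ports C = {p, q} ∧
    ∀ v ∈ nodes C, v ≠ p → v ≠ q → deg C v = 2

/-- A cycle: a connected graph all of whose nodes lie in exactly two edges. -/
def IsCycle (C : Graph) : Prop :=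
  Connected C ∧ ∀ v ∈ nodes C, deg C v = 2

/-- A semi-Kekulé state of `G`: every internal node of `G` lies in an odd
number of edges of `W`. -/
def IsSemiKekule (G W : Graph) : Prop :=
  W ⊆ G ∧ ∀ v ∈ internal G, deg W v % 2 = 1

/-- The signature of `G`. -/
def sig (G : Graph) : ℕ := (internal G).card % 2

/-- `G` is omniconjugated. -/
def Omniconjugated (G : Graph) : Prop :=
  2 ≤ (ports G).card ∧ KP G = {g | g ⊆ ports G ∧ g.card % 2 = sig G}

instance : Std.Commutative (α := Finset Node) (· ∆ ·) := ⟨symmDiff_comm⟩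
instance : Std.Associative (α := Finset Node) (· ∆ ·) := ⟨symmDiff_assoc⟩

/-- The `⊕`-sum of a finite family of port assignments. -/
def xorSum (D : Finset (Finset Node)) : Finset Node := D.fold (· ∆ ·) ∅ id

lemma card_symmDiff_add_two_mul_card_inter {α : Type*} [DecidableEq α] (s t : Finset α) :
    (s ∆ t).card + 2 * (s ∩ t).card = s.card + t.card := by
  have hunion : (s ∆ t).card + (s ∩ t).card = (s ∪ t).card := by
    rw [← Finset.sup_eq_union, ← symmDiff_sup_inf s t, Finset.sup_eq_union,
      Finset.card_union_of_disjoint (disjoint_symmDiff_inf s t)]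
    rfl
  have := Finset.card_union_add_card_inter s t
  omega

section Degree

variable {A B G : Graph} {v : Node}

lemma deg_mono (h : A ⊆ B) (v : Node) : deg A v ≤ deg B v :=
  Finset.card_le_card (Finset.filter_subset_filter _ h)

lemma mem_nodes_iff_deg_ne_zero : v ∈ nodes A ↔ deg A v ≠ 0 := by
  simp [nodes, deg, Finset.filter_eq_empty_iff]

lemma mem_ports_iff_deg_eq_one : v ∈ ports G ↔ deg G v = 1 := by
  rw [ports, Finset.mem_filter, mem_nodes_iff_deg_ne_zero]
  omega

lemma mem_internal_iff : v ∈ internal G ↔ deg G v ≠ 0 ∧ deg G v ≠ 1 := by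
  rw [internal, Finset.mem_filter, mem_nodes_iff_deg_ne_zero]

lemma deg_symmDiff_add_two_mul_deg_inter (A B : Graph) (v : Node) :
    deg (A ∆ B) v + 2 * deg (A ∩ B) v = deg A v + deg B v := by
  have hfilter : (A ∆ B).filter (v ∈ ·) = A.filter (v ∈ ·) ∆ B.filter (v ∈ ·) := by
    ext e; simp only [Finset.mem_filter, Finset.mem_symmDiff]; tauto
  rw [deg, deg, deg, deg, hfilter, Finset.filter_inter_distrib]
  exact card_symmDiff_add_two_mul_card_inter _ _

lemma deg_inter_add_deg_sdiff (A B : Graph) (v : Node) :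
    deg (A ∩ B) v + deg (A \ B) v = deg A v := by
  have hfilter : (A \ B).filter (v ∈ ·) = A.filter (v ∈ ·) \ B.filter (v ∈ ·) := by
    ext e; simp only [Finset.mem_filter, Finset.mem_sdiff]; tauto
  rw [deg, deg, deg, hfilter, Finset.filter_inter_distrib, add_comm]
  exact Finset.card_sdiff_add_card_inter _ _

lemma deg_insert {e : Finset Node} (he : e ∉ A) :
    deg (insert e A) v = deg A v + if v ∈ e then 1 else 0 := by
  unfold deg
  rw [Finset.filter_insert]
  split_ifs with h
  · rw [Finset.card_insert_of_notMem (by simp [he])]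
  · rfl

lemma deg_erase {e : Finset Node} (he : e ∈ A) :
    deg (A.erase e) v + (if v ∈ e then 1 else 0) = deg A v := by
  conv_rhs => rw [← Finset.insert_erase he]
  rw [deg_insert (Finset.notMem_erase e A)]

lemma mem_nodes_symmDiff_iff (hA : A ⊆ G) (hB : B ⊆ G) (hv : deg G v ≤ 1) :
    v ∈ nodes (A ∆ B) ↔ ¬(v ∈ nodes A ↔ v ∈ nodes B) := by
  have hsymm : A ∆ B ⊆ G := symmDiff_le_sup.trans (Finset.union_subset hA hB)
  have := deg_symmDiff_add_two_mul_deg_inter A B v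
  have := deg_mono hsymm v
  have := deg_mono hA v
  have := deg_mono hB v
  simp only [mem_nodes_iff_deg_ne_zero]
  omega

lemma rest_symmDiff (hA : A ⊆ G) (hB : B ⊆ G) :
    rest (A ∆ B) (ports G) = rest A (ports G) ∆ rest B (ports G) := by
  ext v
  simp only [rest, Finset.mem_inter, Finset.mem_symmDiff]
  by_cases hv : v ∈ ports G
  · have := mem_nodes_symmDiff_iff hA hB (mem_ports_iff_deg_eq_one.mp hv).le
    tauto
  · tauto

lemma IsKekule.deg_le_one {W : Graph} (hW : IsKekule G W) (v : Node) : deg W v ≤ 1 := by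
  by_cases hv : v ∈ internal G
  · exact (hW.2 v hv).le
  · have := deg_mono hW.1 v
    rw [mem_internal_iff] at hv
    omega

end Degree

section PathExtraction

variable {C D : Graph} {p q x : Node}

lemma deg_singleton (e : Finset Node) (v : Node) : deg {e} v = if v ∈ e then 1 else 0 := by
  have h := deg_insert (A := ∅) (v := v) (Finset.notMem_empty e)
  rwa [Finset.insert_empty, show deg ∅ v = 0 from rfl, zero_add] at h

lemma notMem_of_deg_eq_zero {e : Finset Node} (h : deg C p = 0) (hp : p ∈ e) : e ∉ C := by
  intro he
  rw [deg, Finset.card_eq_zero, Finset.filter_eq_empty_iff] at h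
  exact h he hp

lemma exists_pair_mem_of_deg_eq_one (hD : IsGraph D) (hp : deg D p = 1) :
    ∃ x ≠ p, {p, x} ∈ D := by
  obtain ⟨e, he⟩ := Finset.card_eq_one.mp hp
  obtain ⟨heD, hpe⟩ := Finset.mem_filter.mp (he ▸ Finset.mem_singleton_self e)
  obtain ⟨x, hxe, hxp⟩ := Finset.exists_mem_ne (by rw [hD e heD]; omega) p
  have hsub : {p, x} ⊆ e := Finset.insert_subset hpe (Finset.singleton_subset_iff.mpr hxe)
  have hcard : e.card ≤ ({p, x} : Finset Node).card := by
    rw [hD e heD, Finset.card_pair hxp.symm]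
  exact ⟨x, hxp, Finset.eq_of_subset_of_card_le hsub hcard ▸ heD⟩

/-- The degrees of a path from `p` to `q`, possibly together with disjoint cycles. -/
def IsPathLike (C : Graph) (p q : Node) : Prop :=
  deg C p = 1 ∧ deg C q = 1 ∧ ∀ v, v ≠ p → v ≠ q → deg C v = 0 ∨ deg C v = 2

lemma isPathLike_pair (hxp : x ≠ p) : IsPathLike {{p, x}} p x := by
  refine ⟨?_, ?_, fun v hvp hvx => Or.inl ?_⟩ <;> simp_all [deg_singleton]

lemma IsPathLike.insert_pair (hC : IsPathLike C x q) (hpC : deg C p = 0) (hxp : x ≠ p)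
    (hqp : q ≠ p) (hqx : q ≠ x) : IsPathLike (insert {p, x} C) p q := by
  have hdeg := fun v =>
    deg_insert (v := v) (notMem_of_deg_eq_zero hpC (Finset.mem_insert_self p {x}))
  obtain ⟨hCx, hCq, hCv⟩ := hC
  refine ⟨?_, ?_, fun v hvp hvq => ?_⟩
  · simp [hdeg, hpC]
  · simp [hdeg, hCq, hqp, hqx]
  · by_cases hvx : v = x
    · subst hvx
      simp [hdeg, hCx]
    · simpa [hdeg, hvp, hvx] using hCv v hvx hvq

theorem exists_isPathLike_subset (hD : IsGraph D) (hdeg : ∀ v, deg D v ≤ 2)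
    (hp : deg D p = 1) : ∃ C ⊆ D, ∃ q ≠ p, deg D q = 1 ∧ IsPathLike C p q := by
  induction D using Finset.strongInduction generalizing p with
  | H D ih =>
    obtain ⟨x, hxp, he⟩ := exists_pair_mem_of_deg_eq_one hD hp
    have hdeg' := fun v => deg_erase (v := v) he
    have hDp : deg (D.erase {p, x}) p = 0 := by simpa [hp] using hdeg' p
    by_cases hDx : deg D x = 1
    · exact ⟨{{p, x}}, Finset.singleton_subset_iff.mpr he, x, hxp, hDx, isPathLike_pair hxp⟩
    have hDx' : deg (D.erase {p, x}) x = 1 := by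
      have := hdeg x
      have := hdeg' x
      simp only [Finset.mem_insert, Finset.mem_singleton, or_true, ↓reduceIte] at this
      omega
    obtain ⟨C, hCD, q, hqx, hDq, hC⟩ := ih _ (Finset.erase_ssubset he)
      (fun e h => hD e (Finset.mem_of_mem_erase h))
      (fun v => (deg_mono (Finset.erase_subset _ _) v).trans (hdeg v)) hDx'
    have hqp : q ≠ p := by rintro rfl; omega
    refine ⟨insert {p, x} C, Finset.insert_subset he (hCD.trans (Finset.erase_subset _ _)),
      q, hqp, ?_, hC.insert_pair ?_ hxp hqp hqx⟩
    · simpa [hDq, hqp, hqx] using (hdeg' q).symm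
    · have := deg_mono hCD p; omega

end PathExtraction

section Flip

variable {G W W' C : Graph} {p q : Node}

lemma IsKekule.symmDiff_subset (hW : IsKekule G W) (hW' : IsKekule G W') : W ∆ W' ⊆ G :=
  symmDiff_le_sup.trans (Finset.union_subset hW.1 hW'.1)

lemma IsKekule.deg_symmDiff_le_two (hW : IsKekule G W) (hW' : IsKekule G W') (v : Node) :
    deg (W ∆ W') v ≤ 2 := by
  have := deg_symmDiff_add_two_mul_deg_inter W W' v
  have := hW.deg_le_one v
  have := hW'.deg_le_one v
  omega

lemma IsKekule.deg_symmDiff_ne_one (hW : IsKekule G W) (hW' : IsKekule G W') {v : Node}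
    (hv : v ∈ internal G) : deg (W ∆ W') v ≠ 1 := by
  have := deg_symmDiff_add_two_mul_deg_inter W W' v
  have := hW.2 v hv
  have := hW'.2 v hv
  omega

/-- At an internal node met by `C`, the two edges of `C` are one edge of `W` and one of `W'`,
so flipping along `C` swaps the `W`-edge for the `W'`-edge. -/
lemma IsKekule.symmDiff_of_subset (hW : IsKekule G W) (hW' : IsKekule G W') (hC : C ⊆ W ∆ W')
    (hCdeg : ∀ v ∈ internal G, deg C v = 0 ∨ deg C v = 2) : IsKekule G (W ∆ C) := by
  refine ⟨symmDiff_le_sup.trans (Finset.union_subset hW.1 (hC.trans (hW.symmDiff_subset hW'))),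
    fun v hv => ?_⟩
  have hCW' : C \ W ⊆ W' := fun e he => by
    rcases Finset.mem_symmDiff.mp (hC (Finset.mem_sdiff.mp he).1) with h | h
    · exact absurd h.1 (Finset.mem_sdiff.mp he).2
    · exact h.1
  have hflip := deg_symmDiff_add_two_mul_deg_inter W C v
  rw [Finset.inter_comm] at hflip
  have := deg_inter_add_deg_sdiff C W v
  have := deg_mono hCW' v
  have := deg_mono (Finset.inter_subset_right (s₁ := C) (s₂ := W)) v
  have := hW.2 v hv
  have := hW'.2 v hv
  rcases hCdeg v hv with h | h <;> omega

lemma rest_ports_eq_pair (hCG : C ⊆ G) (hC : IsPathLike C p q) (hp : p ∈ ports G)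
    (hq : q ∈ ports G) : rest C (ports G) = {p, q} := by
  ext r
  simp only [rest, Finset.mem_inter, Finset.mem_insert, Finset.mem_singleton,
    mem_nodes_iff_deg_ne_zero]
  by_cases hrp : r = p
  · subst hrp; simp [hp, hC.1]
  by_cases hrq : r = q
  · subst hrq; simp [hq, hC.2.1]
  simp only [hrp, hrq, or_self, iff_false, not_and, not_not]
  intro hr
  have := deg_mono hCG r
  have := mem_ports_iff_deg_eq_one.mp hr
  have := hC.2.2 r hrp hrq
  omega

theorem exists_isKekule_rest_eq_symmDiff_pair (hG : IsGraph G) (hW : IsKekule G W)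
    (hW' : IsKekule G W') (hp : p ∈ rest W (ports G) ∆ rest W' (ports G)) :
    ∃ q ∈ ports G, q ≠ p ∧ ∃ W'', IsKekule G W'' ∧
      rest W'' (ports G) = rest W (ports G) ∆ {p, q} := by
  have hDG := hW.symmDiff_subset hW'
  rw [← rest_symmDiff hW.1 hW'.1, rest, Finset.mem_inter, mem_ports_iff_deg_eq_one,
    mem_nodes_iff_deg_ne_zero] at hp
  have hDp : deg (W ∆ W') p = 1 := by have := deg_mono hDG p; omega
  obtain ⟨C, hCD, q, hqp, hDq, hC⟩ := exists_isPathLike_subset (fun e he => hG e (hDG he))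
    (hW.deg_symmDiff_le_two hW') hDp
  have hq : q ∈ ports G := by
    have hGq := deg_mono hDG q
    have hqint : q ∉ internal G := fun h => hW.deg_symmDiff_ne_one hW' h hDq
    rw [mem_internal_iff] at hqint
    exact mem_ports_iff_deg_eq_one.mpr (by omega)
  have hp' : p ∈ ports G := mem_ports_iff_deg_eq_one.mpr hp.1
  have hCdeg : ∀ v ∈ internal G, deg C v = 0 ∨ deg C v = 2 := fun v hv =>
    hC.2.2 v (by rintro rfl; simp [mem_internal_iff, hp.1] at hv)
      (by rintro rfl; simp [mem_internal_iff, mem_ports_iff_deg_eq_one.mp hq] at hv)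
  have hCG := hCD.trans hDG
  refine ⟨q, hq, hqp, W ∆ C, hW.symmDiff_of_subset hW' hCD hCdeg, ?_⟩
  rw [rest_symmDiff hW.1 hCG, rest_ports_eq_pair hCG hC hp' hq]

theorem exists_symmDiff_pair_mem_KP (hG : IsGraph G) {g g' : Finset Node} (hg : g ∈ KP G)
    (hg' : g' ∈ KP G) (hp : p ∈ g ∆ g') :
    ∃ q ∈ ports G, q ≠ p ∧ g ∆ {p, q} ∈ KP G := by
  obtain ⟨W, hW, rfl⟩ := hg
  obtain ⟨W', hW', rfl⟩ := hg'
  obtain ⟨q, hq, hqp, W'', hW'', hrest⟩ := exists_isKekule_rest_eq_symmDiff_pair hG hW hW' hp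
  exact ⟨q, hq, hqp, W'', hW'', hrest⟩

end Flip

section Cell

variable {K : Set (Finset Node)} {p : Node}

lemma Flexible.exists_mem_symmDiff (h : Flexible K p) (g : Finset Node) :
    ∃ g' ∈ K, p ∈ g ∆ g' := by
  obtain ⟨g₁, hg₁, g₂, hg₂, hp₁, hp₂⟩ := h
  by_cases hpg : p ∈ g
  · exact ⟨g₂, hg₂, Finset.mem_symmDiff.mpr (Or.inl ⟨hpg, hp₂⟩)⟩
  · exact ⟨g₁, hg₁, Finset.mem_symmDiff.mpr (Or.inr ⟨hp₁, hpg⟩)⟩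

lemma flexible_of_mem_symmDiff {g g' : Finset Node} (hg : g ∈ K) (hg' : g' ∈ K)
    (hp : p ∈ g ∆ g') : Flexible K p := by
  rcases Finset.mem_symmDiff.mp hp with ⟨hpg, hpg'⟩ | ⟨hpg', hpg⟩
  · exact ⟨g, hg, g', hg', hpg, hpg'⟩
  · exact ⟨g', hg', g, hg, hpg', hpg⟩

end Cell

/-- (a) If `p` is flexible for a Kekulé cell `K`, then for every
`g ∈ K` there is a channel `c` with `p ∈ c` and `g ⊕ c ∈ K`.
(b) If `K` has a flexible port, it has at least two flexible ports. -/
theorem statement6 (P : Finset Node) (K : Set (Finset Node))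
    (hK : IsKekuleCell P K) :
    (∀ p ∈ P, Flexible K p → ∀ g ∈ K,
        ∃ c : Finset Node, IsChannel P c ∧ p ∈ c ∧ g ∆ c ∈ K) ∧
    ((∃ p, Flexible K p) → ∃ p q, p ≠ q ∧ Flexible K p ∧ Flexible K q) := by
  obtain ⟨G, hG, rfl, rfl⟩ := hK
  have hpair : ∀ p, Flexible (KP G) p → ∀ g ∈ KP G,
      ∃ q ∈ ports G, q ≠ p ∧ g ∆ {p, q} ∈ KP G := fun p hp g hg => by
    obtain ⟨g', hg', hpg⟩ := hp.exists_mem_symmDiff g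
    exact exists_symmDiff_pair_mem_KP hG hg hg' hpg
  refine ⟨fun p hpP hp g hg => ?_, fun ⟨p, hp⟩ => ?_⟩
  · obtain ⟨q, hq, hqp, hgq⟩ := hpair p hp g hg
    exact ⟨{p, q}, ⟨Finset.insert_subset hpP (Finset.singleton_subset_iff.mpr hq),
      Finset.card_pair hqp.symm⟩, Finset.mem_insert_self p {q}, hgq⟩
  · obtain ⟨g, hg, -⟩ := id hp
    obtain ⟨q, -, hqp, hgq⟩ := hpair p hp g hg
    refine ⟨p, q, hqp.symm, hp, flexible_of_mem_symmDiff hg hgq ?_⟩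
    simp [symmDiff_symmDiff_cancel_left]

end Kekule
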